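/- Every Souslin set in the Effros Borel space (F(ℕ^ℕ), 𝓑_{F(ℕ^ℕ)}) that contains all countable closed subsets of the irrationals ℕ^ℕ contains a non-σ-compact element. -/

import Mathlib

/-!
Suppose every member of `𝓐` is σ-compact. To a set `T` of finite sequences attach the closed set
`K(T)` of those `x : ℕ → ℕ` such that, for every `n`, either the first `n` odd coordinates of `x`
form a word of `T` or `x` vanishes from `2n` on. If `T` has no infinite branch, `K(T)` consists of
eventually zero sequences, so it is countable and lies in `𝓐`; if `T` has a branch `b`, `K(T)`
contains every sequence with odd part `b`, so it maps onto `ℕ → ℕ` and is not σ-compact. As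
`T ↦ K(T)` is Effros measurable, the set of `T` without branch would be Souslin.

It is not: every Souslin set is a measurable preimage of the set of `T` with a branch, so all
complements of Souslin sets would be Souslin. A diagonal argument refutes this: Souslin schemes of
basic clopen subsets of `Set (List ℕ)` can be coded by points of `Set (List ℕ)`, and idempotence of
the Souslin operation reduces Souslin sets over the product σ-algebra to such schemes.
-/

open Set Topology TopologicalSpace MeasureTheory

/-- The Effros Borel structure on the collection of closed subsets of `X`. -/
def effrosSigma (X : Type*) [TopologicalSpace X] :
    MeasurableSpace {A : Set X // IsClosed A} :=
  MeasurableSpace.generateFrom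
    {𝓤 : Set {A : Set X // IsClosed A} |
      ∃ U : Set X, IsOpen U ∧ 𝓤 = {A : {A : Set X // IsClosed A} | ((A : Set X) ∩ U).Nonempty}}

/-- `𝓐` is the result of the Souslin operation applied to `m`-measurable sets. -/
def IsSouslinIn {α : Type*} (m : MeasurableSpace α) (𝓐 : Set α) : Prop :=
  ∃ f : List ℕ → Set α, (∀ s, MeasurableSet[m] (f s)) ∧
    𝓐 = ⋃ σ : ℕ → ℕ, ⋂ n : ℕ, f (List.ofFn fun i : Fin n => σ i)

/-- dim X ≤ 0 : `X` has a base consisting of clopen sets (or is empty). -/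
def ZeroDimensional (X : Type*) [TopologicalSpace X] : Prop :=
  ∃ B : Set (Set X), (∀ s ∈ B, IsClopen s) ∧ IsTopologicalBasis B

/-- Every point of `S` is isolated in the subspace `S`. -/
def RelativelyDiscrete {E : Type*} [TopologicalSpace E] (S : Set E) : Prop :=
  ∀ x ∈ S, ∃ U : Set E, IsOpen U ∧ U ∩ S = {x}

/-- countable union of zero-dimensional subspaces -/
def CountableDimensional (X : Type*) [TopologicalSpace X] : Prop :=
  ∃ C : ℕ → Set X, (⋃ n, C n) = univ ∧ ∀ n, ZeroDimensional (C n)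

/-- F₀(X): nonempty zero-dimensional closed sets -/
def zeroDimClosedSets (X : Type*) [TopologicalSpace X] :
    Set {A : Set X // IsClosed A} :=
  {A | (A : Set X).Nonempty ∧ ZeroDimensional (A : Set X)}

/-- The Vietoris topology on the collection of closed subsets of `X`. -/
def vietoris (X : Type*) [TopologicalSpace X] :
    TopologicalSpace {A : Set X // IsClosed A} :=
  TopologicalSpace.generateFrom
    ({𝓤 | ∃ U : Set X, IsOpen U ∧ 𝓤 = {A : {A : Set X // IsClosed A} | (A : Set X) ⊆ U}} ∪
     {𝓤 | ∃ U : Set X, IsOpen U ∧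
        𝓤 = {A : {A : Set X // IsClosed A} | ((A : Set X) ∩ U).Nonempty}})

/-- The Wijsman topology on nonempty closed subsets of a metric space. -/
noncomputable def wijsman (E : Type*) [MetricSpace E] :
    TopologicalSpace {A : Set E // IsClosed A ∧ A.Nonempty} :=
  ⨅ z : E, TopologicalSpace.induced (fun A => Metric.infDist z (A : Set E)) inferInstance

open Filter

def seqPrefix (σ : ℕ → ℕ) (n : ℕ) : List ℕ := List.ofFn fun i : Fin n => σ i

@[simp]
lemma length_seqPrefix (σ : ℕ → ℕ) (n : ℕ) : (seqPrefix σ n).length = n := by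
  simp [seqPrefix]

lemma take_seqPrefix (σ : ℕ → ℕ) {k n : ℕ} (h : k ≤ n) :
    (seqPrefix σ n).take k = seqPrefix σ k :=
  List.ext_getElem (by simpa using h) fun i _ _ => by simp [seqPrefix]

lemma getD_seqPrefix (σ : ℕ → ℕ) {i n : ℕ} (h : i < n) : (seqPrefix σ n).getD i 0 = σ i := by
  simp [seqPrefix, h]

lemma seqPrefix_succ (σ : ℕ → ℕ) (n : ℕ) :
    seqPrefix σ (n + 1) = σ 0 :: seqPrefix (fun i => σ (i + 1)) n := by
  simp [seqPrefix, List.ofFn_succ]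

lemma seqPrefix_congr {σ τ : ℕ → ℕ} {n : ℕ} (h : ∀ i < n, σ i = τ i) :
    seqPrefix σ n = seqPrefix τ n :=
  List.ofFn_inj.2 <| funext fun i => h i i.2

def hasBranch : Set (Set (List ℕ)) := {T | ∃ b : ℕ → ℕ, ∀ n, seqPrefix b n ∈ T}

section Souslin

variable {α : Type*}

def souslinOp (f : List ℕ → Set α) : Set α := ⋃ σ : ℕ → ℕ, ⋂ n, f (seqPrefix σ n)

def souslinSets (𝓕 : Set (Set α)) : Set (Set α) :=
  {A | ∃ f : List ℕ → Set α, (∀ s, f s ∈ 𝓕) ∧ A = souslinOp f}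

lemma IsSouslinIn.preimage {β : Type*} {m : MeasurableSpace α} {m' : MeasurableSpace β}
    {g : α → β} (hg : Measurable[m, m'] g) {A : Set β} (hA : IsSouslinIn m' A) :
    IsSouslinIn m (g ⁻¹' A) := by
  obtain ⟨f, hf, rfl⟩ := hA
  exact ⟨fun s => g ⁻¹' f s, fun s => hg (hf s), by simp [preimage_iUnion, preimage_iInter]⟩

def schemeTree (f : List ℕ → Set α) (x : α) : Set (List ℕ) :=
  {u | ∀ k ≤ u.length, x ∈ f (u.take k)}

lemma souslinOp_eq_preimage_hasBranch (f : List ℕ → Set α) :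
    souslinOp f = schemeTree f ⁻¹' hasBranch := by
  ext x
  simp only [souslinOp, hasBranch, schemeTree, mem_iUnion, mem_iInter, mem_preimage,
    mem_ofPred_eq, length_seqPrefix]
  refine exists_congr fun b => ⟨fun h n k hk => ?_, fun h n => ?_⟩
  · simpa [take_seqPrefix b hk] using h k
  · simpa [take_seqPrefix b le_rfl] using h n n le_rfl

lemma measurable_schemeTree [MeasurableSpace α] {f : List ℕ → Set α}
    (hf : ∀ s, MeasurableSet (f s)) : Measurable (schemeTree f) :=
  measurable_set_iff.2 fun u => measurableSet_setOfPred.1 <| by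
    have : {x | u ∈ schemeTree f x} = ⋂ k ∈ Iic u.length, f (u.take k) := by
      ext; simp [schemeTree]
    exact this ▸ .biInter (to_countable _) fun _ _ => hf _

lemma FiniteInter.biInter_mem {β : Type*} {𝓕 : Set (Set α)} (h𝓕 : FiniteInter 𝓕)
    (D : Finset β) {g : β → Set α} (hg : ∀ p ∈ D, g p ∈ 𝓕) : ⋂ p ∈ D, g p ∈ 𝓕 := by
  simpa [sInter_image] using h𝓕.finiteInter_mem (D.image g) (by simpa [subset_def] using hg)

end Souslin

namespace SouslinMerge

noncomputable def index : ℕ ⊕ ℕ × ℕ ≃ ℕ := Denumerable.eqv _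

def pick (s : List ℕ) (idx : ℕ → ℕ) (n : ℕ) : List ℕ :=
  List.ofFn fun k : Fin n => s.getD (idx k) 0

lemma pick_seqPrefix {ρ idx : ℕ → ℕ} {j n : ℕ} (h : ∀ k < n, idx k < j) :
    pick (seqPrefix ρ j) idx n = seqPrefix (fun k => ρ (idx k)) n :=
  List.ofFn_inj.2 <| funext fun k => getD_seqPrefix ρ (h k k.2)

def Readable (j n m : ℕ) : Prop :=
  (∀ k < n, index (.inl k) < j) ∧ ∀ k < m, index (.inr (n, k)) < j

lemma eventually_readable (n m : ℕ) : ∀ᶠ j in atTop, Readable j n m :=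
  ((finite_lt_nat n).eventually_all.2 fun _ _ => eventually_gt_atTop _).and
    ((finite_lt_nat m).eventually_all.2 fun _ _ => eventually_gt_atTop _)

open Classical in
noncomputable def readablePairs (j : ℕ) : Finset (ℕ × ℕ) :=
  (Finset.range (j + 1) ×ˢ Finset.range (j + 1)).filter fun p => Readable j p.1 p.2

lemma mem_readablePairs {j n m : ℕ} (hn : n ≤ j) (hm : m ≤ j) (h : Readable j n m) :
    (n, m) ∈ readablePairs j := by
  simp [readablePairs, Nat.lt_succ_of_le hn, Nat.lt_succ_of_le hm, h]

lemma readable_of_mem_readablePairs {j : ℕ} {p : ℕ × ℕ} (h : p ∈ readablePairs j) :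
    Readable j p.1 p.2 := by
  simp only [readablePairs, Finset.mem_filter] at h
  exact h.2

/-- A sequence `ρ` codes `σ := ρ ∘ index ∘ inl` and `τ n := ρ ∘ index ∘ inr ∘ (n, ·)`; the merged
scheme at `ρ|j` imposes every condition `g (σ|n) (τ n|m)` that `ρ|j` already determines. -/
noncomputable def scheme {α : Type*} (g : List ℕ → List ℕ → Set α) (s : List ℕ) : Set α :=
  ⋂ p ∈ readablePairs s.length,
    g (pick s (fun k => index (.inl k)) p.1) (pick s (fun k => index (.inr (p.1, k))) p.2)

end SouslinMerge

section SouslinSets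

variable {α : Type*} {𝓕 : Set (Set α)}

open SouslinMerge in
theorem souslinOp_mem_souslinSets (h𝓕 : FiniteInter 𝓕) {f : List ℕ → Set α}
    (hf : ∀ s, f s ∈ souslinSets 𝓕) : souslinOp f ∈ souslinSets 𝓕 := by
  choose g hg hfg using hf
  refine ⟨scheme g, fun s => h𝓕.biInter_mem _ fun p _ => hg _ _, ?_⟩
  ext x
  simp only [souslinOp, hfg, scheme, mem_iUnion, mem_iInter, length_seqPrefix]
  constructor
  · rintro ⟨σ, hσ⟩
    choose τ hτ using hσ
    refine ⟨fun i => Sum.elim σ (fun p => τ p.1 p.2) (index.symm i), fun j p hp => ?_⟩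
    obtain ⟨hn, hm⟩ := readable_of_mem_readablePairs hp
    rw [pick_seqPrefix hn, pick_seqPrefix hm]
    simpa using hτ p.1 p.2
  · rintro ⟨ρ, hρ⟩
    refine ⟨fun k => ρ (index (.inl k)), fun n => ⟨fun m => ρ (index (.inr (n, m))), fun m => ?_⟩⟩
    obtain ⟨j, ⟨hr, hn⟩, hm⟩ :=
      ((eventually_readable n m).and (eventually_ge_atTop n)).and (eventually_ge_atTop m) |>.exists
    have := hρ j (n, m) (mem_readablePairs hn hm hr)
    rwa [pick_seqPrefix hr.1, pick_seqPrefix hr.2] at this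

lemma mem_souslinSets_of_mem {s : Set α} (hs : s ∈ 𝓕) : s ∈ souslinSets 𝓕 :=
  ⟨fun _ => s, fun _ => hs, by simp only [souslinOp, iInter_const, iUnion_const]⟩

lemma iUnion_mem_souslinSets (h𝓕 : FiniteInter 𝓕) {B : ℕ → Set α}
    (hB : ∀ i, B i ∈ souslinSets 𝓕) : ⋃ i, B i ∈ souslinSets 𝓕 := by
  have : ⋃ i, B i = souslinOp fun | [] => univ | i :: _ => B i := by
    ext x
    simp only [souslinOp, mem_iUnion, mem_iInter]
    constructor
    · rintro ⟨i, hi⟩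
      refine ⟨fun _ => i, fun n => ?_⟩
      cases n
      · trivial
      · simpa [seqPrefix_succ] using hi
    · rintro ⟨σ, hσ⟩
      exact ⟨σ 0, by simpa [seqPrefix_succ] using hσ 1⟩
  rw [this]
  refine souslinOp_mem_souslinSets h𝓕 fun s => ?_
  rcases s with _ | ⟨i, _⟩
  exacts [mem_souslinSets_of_mem h𝓕.univ_mem, hB i]

lemma iInter_mem_souslinSets (h𝓕 : FiniteInter 𝓕) {B : ℕ → Set α}
    (hB : ∀ i, B i ∈ souslinSets 𝓕) : ⋂ i, B i ∈ souslinSets 𝓕 := by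
  have : ⋂ i, B i = souslinOp fun s => if s = [] then univ else B (s.length - 1) := by
    ext x
    simp only [souslinOp, mem_iUnion, mem_iInter]
    constructor
    · intro hx
      refine ⟨fun _ => 0, fun n => ?_⟩
      cases n <;> simp [seqPrefix_succ, hx]
    · rintro ⟨σ, hσ⟩ i
      simpa [seqPrefix_succ] using hσ (i + 1)
  rw [this]
  refine souslinOp_mem_souslinSets h𝓕 fun s => ?_
  split_ifs
  exacts [mem_souslinSets_of_mem h𝓕.univ_mem, hB _]

abbrev biSouslin (h𝓕 : FiniteInter 𝓕) (hempty : ∅ ∈ 𝓕) : MeasurableSpace α where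
  MeasurableSet' B := B ∈ souslinSets 𝓕 ∧ Bᶜ ∈ souslinSets 𝓕
  measurableSet_empty :=
    ⟨mem_souslinSets_of_mem hempty, by simpa using mem_souslinSets_of_mem h𝓕.univ_mem⟩
  measurableSet_compl _ hB := ⟨hB.2, by simpa using hB.1⟩
  measurableSet_iUnion B hB := ⟨iUnion_mem_souslinSets h𝓕 fun i => (hB i).1,
    by simpa using iInter_mem_souslinSets h𝓕 fun i => (hB i).2⟩

end SouslinSets

def basicSet (p : Finset (List ℕ) × Finset (List ℕ)) : Set (Set (List ℕ)) :=
  {T | ↑p.1 ⊆ T ∧ ∀ t ∈ p.2, t ∉ T}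

lemma finiteInter_basicSets : FiniteInter (range basicSet) where
  univ_mem := ⟨(∅, ∅), by ext; simp [basicSet]⟩
  inter_mem := by
    rintro _ ⟨p, rfl⟩ _ ⟨q, rfl⟩
    refine ⟨(p.1 ∪ q.1, p.2 ∪ q.2), ?_⟩
    ext T
    simp only [basicSet, Finset.coe_union, union_subset_iff, Finset.mem_union, mem_inter_iff,
      mem_ofPred_eq]
    grind

lemma empty_mem_basicSets : ∅ ∈ range basicSet :=
  ⟨({[]}, {[]}), by ext; simp [basicSet]⟩

lemma measurableSet_basicSet (p : Finset (List ℕ) × Finset (List ℕ)) :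
    MeasurableSet (basicSet p) :=
  measurableSet_setOfPred.2 <| .and (.forall fun t => .forall fun _ => measurable_set_mem t)
    (.forall fun t => .forall fun _ => measurable_set_notMem t)

lemma instMeasurableSpace_le_biSouslin :
    Set.instMeasurableSpace ≤ biSouslin finiteInter_basicSets empty_mem_basicSets := by
  let m := biSouslin finiteInter_basicSets empty_mem_basicSets
  refine measurable_iff_le_map.1 (@measurable_set_iff _ _ m id |>.2 fun t => measurable_to_prop ?_)
  refine ⟨mem_souslinSets_of_mem ⟨({t}, ∅), ?_⟩, mem_souslinSets_of_mem ⟨(∅, {t}), ?_⟩⟩ <;>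
    ext <;> simp [basicSet]

lemma IsSouslinIn.mem_souslinSets_basicSets {A : Set (Set (List ℕ))}
    (hA : IsSouslinIn Set.instMeasurableSpace A) : A ∈ souslinSets (range basicSet) := by
  obtain ⟨f, hf, rfl⟩ := hA
  exact souslinOp_mem_souslinSets finiteInter_basicSets fun s =>
    (instMeasurableSpace_le_biSouslin _ (hf s)).1

section Diagonal

def marker (s : List ℕ) (p : Finset (List ℕ) × Finset (List ℕ)) : List ℕ :=
  [Encodable.encode (s, p)]

lemma marker_injective : Function.Injective2 marker := fun _ _ _ _ h => by
  simpa using Encodable.encode_injective (List.head_eq_of_cons_eq h)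

def codeSet (c : List ℕ → Finset (List ℕ) × Finset (List ℕ)) : Set (List ℕ) :=
  range fun s => marker s (c s)

def diagScheme (s : List ℕ) : Set (Set (List ℕ)) :=
  {T | ∃ p, T ∈ basicSet p ∧ ∀ q, marker s q ∈ T ↔ q = p}

lemma codeSet_mem_diagScheme_iff (c : List ℕ → Finset (List ℕ) × Finset (List ℕ)) (s : List ℕ) :
    codeSet c ∈ diagScheme s ↔ codeSet c ∈ basicSet (c s) := by
  have hmark : ∀ q, marker s q ∈ codeSet c ↔ q = c s := fun q =>
    ⟨fun ⟨_, h⟩ => (marker_injective h).2.symm.trans (congrArg c (marker_injective h).1),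
      fun h => ⟨s, h ▸ rfl⟩⟩
  simp only [diagScheme, mem_ofPred_eq, hmark]
  exact ⟨fun ⟨_, hp, h⟩ => (h (c s)).1 rfl ▸ hp, fun h => ⟨c s, h, fun _ => Iff.rfl⟩⟩

lemma measurableSet_diagScheme (s : List ℕ) : MeasurableSet (diagScheme s) := by
  have : diagScheme s = ⋃ p, basicSet p ∩ ⋂ q, {T | marker s q ∈ T ↔ q = p} := by
    ext; simp [diagScheme]
  rw [this]
  exact .iUnion fun p => (measurableSet_basicSet p).inter <| .iInter fun q =>
    measurableSet_setOfPred.2 <| (measurable_set_mem _).iff measurable_const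

theorem compl_souslinOp_diagScheme_notMem :
    (souslinOp diagScheme)ᶜ ∉ souslinSets (range basicSet) := by
  rintro ⟨f, hf, hU⟩
  choose c hc using hf
  have : codeSet c ∈ souslinOp diagScheme ↔ codeSet c ∈ souslinOp f := by
    simp only [souslinOp, mem_iUnion, mem_iInter, codeSet_mem_diagScheme_iff, hc]
  exact iff_not_self (hU ▸ this)

end Diagonal

theorem not_isSouslinIn_compl_hasBranch : ¬ IsSouslinIn Set.instMeasurableSpace hasBranchᶜ := by
  intro h
  apply compl_souslinOp_diagScheme_notMem
  rw [souslinOp_eq_preimage_hasBranch, ← preimage_compl]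
  exact (h.preimage (measurable_schemeTree measurableSet_diagScheme)).mem_souslinSets_basicSets

lemma not_isSigmaCompact_univ_nat_nat : ¬ IsSigmaCompact (univ : Set (ℕ → ℕ)) := by
  rintro ⟨K, hK, hcover⟩
  choose c hc using fun n => ((hK n).image (continuous_apply n)).bddAbove
  obtain ⟨n, hn⟩ := mem_iUnion.1 (hcover.symm ▸ mem_univ fun n => c n + 1)
  exact (hc n (mem_image_of_mem _ hn)).not_gt (Nat.lt_succ_self _)

lemma countable_setOf_finite_support : {x : ℕ → ℕ | x.support.Finite}.Countable := by
  refine (countable_range fun f : ℕ →₀ ℕ => ⇑f).mono fun x hx => ?_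
  exact ⟨Finsupp.ofSupportFinite x hx, rfl⟩

lemma tendsto_indicator_Iio (x : ℕ → ℕ) : Tendsto (fun N => (Iio N).indicator x) atTop (𝓝 x) :=
  tendsto_pi_nhds.2 fun i => tendsto_const_nhds.congr' <|
    (eventually_gt_atTop i).mono fun _ hN => (indicator_of_mem (mem_Iio.2 hN) x).symm

section TreeClosedSet

def oddPart (x : ℕ → ℕ) : ℕ → ℕ := fun i => x (2 * i + 1)

/-- The alternative "`x` vanishes from `2n` on" keeps the truncations of a point in the set, which
gives the countable dense subsets that make `treeClosed` Effros measurable. -/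
def treeClosedSet (T : Set (List ℕ)) : Set (ℕ → ℕ) :=
  {x | ∀ n, seqPrefix (oddPart x) n ∈ T ∨ ∀ m, 2 * n ≤ m → x m = 0}

lemma isClosed_treeClosedSet (T : Set (List ℕ)) : IsClosed (treeClosedSet T) := by
  simp only [treeClosedSet, ofPred_forall, ofPred_or]
  refine isClosed_iInter fun n => .union ?_ (isClosed_biInter fun m _ => ?_)
  · exact (isClosed_discrete {v : Fin n → ℕ | List.ofFn v ∈ T}).preimage
      (f := fun (x : ℕ → ℕ) (i : Fin n) => x (2 * i + 1)) (by fun_prop)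
  · exact isClosed_eq (continuous_apply m) continuous_const

lemma countable_treeClosedSet {T : Set (List ℕ)} (hT : T ∉ hasBranch) :
    (treeClosedSet T).Countable := by
  refine countable_setOf_finite_support.mono fun x hx => ?_
  obtain ⟨n, hn⟩ : ∃ n, seqPrefix (oddPart x) n ∉ T := by
    by_contra! h
    exact hT ⟨oddPart x, h⟩
  refine (finite_lt_nat (2 * n)).subset fun m hm => ?_
  by_contra! hnm
  exact hm (((hx n).resolve_left hn) m (not_lt.1 hnm))

lemma not_isSigmaCompact_treeClosedSet {T : Set (List ℕ)} (hT : T ∈ hasBranch) :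
    ¬ IsSigmaCompact (treeClosedSet T) := by
  obtain ⟨b, hb⟩ := hT
  have himage : (fun x i => x (2 * i)) '' treeClosedSet T = univ := by
    refine eq_univ_of_forall fun y => ⟨fun m => if Even m then y (m / 2) else b (m / 2), ?_, ?_⟩
    · have : oddPart (fun m => if Even m then y (m / 2) else b (m / 2)) = b := by
        funext i
        simp [oddPart, Nat.mul_add_div]
      exact fun n => .inl (by rw [this]; exact hb n)
    · funext i
      simp
  exact fun h => not_isSigmaCompact_univ_nat_nat (himage ▸ h.image (by fun_prop))

lemma indicator_Iio_mem_treeClosedSet {T : Set (List ℕ)} {x : ℕ → ℕ}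
    (hx : x ∈ treeClosedSet T) (N : ℕ) : (Iio N).indicator x ∈ treeClosedSet T := by
  intro n
  by_cases hn : 2 * n ≤ N
  · have hodd : ∀ i < n, oddPart ((Iio N).indicator x) i = oddPart x i := fun i hi =>
      indicator_of_mem (show 2 * i + 1 ∈ Iio N by simp only [mem_Iio]; omega) x
    rw [seqPrefix_congr hodd]
    exact (hx n).imp_right fun hx m hm => by simp [hx m hm]
  · exact .inr fun m hm => indicator_of_notMem (by simp; omega) x

lemma measurableSet_setOf_mem_treeClosedSet (x : ℕ → ℕ) :
    MeasurableSet {T | x ∈ treeClosedSet T} :=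
  measurableSet_setOfPred.2 <| .forall fun _ => (measurable_set_mem _).or measurable_const

def treeClosed (T : Set (List ℕ)) : {A : Set (ℕ → ℕ) // IsClosed A} :=
  ⟨treeClosedSet T, isClosed_treeClosedSet T⟩

lemma measurable_treeClosed : Measurable[_, effrosSigma (ℕ → ℕ)] treeClosed := by
  refine measurable_generateFrom ?_
  rintro _ ⟨U, hU, rfl⟩
  have : treeClosed ⁻¹' {A | (A.1 ∩ U).Nonempty} =
      ⋃ y ∈ {y : ℕ → ℕ | y.support.Finite} ∩ U, {T | y ∈ treeClosedSet T} := by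
    ext T
    simp only [treeClosed, mem_preimage, mem_ofPred_eq, mem_iUnion, mem_inter_iff, exists_prop]
    constructor
    · rintro ⟨x, hxT, hxU⟩
      obtain ⟨N, hN⟩ := ((tendsto_indicator_Iio x).eventually (hU.mem_nhds hxU)).exists
      exact ⟨_, ⟨(finite_Iio N).subset support_indicator_subset, hN⟩,
        indicator_Iio_mem_treeClosedSet hxT N⟩
    · rintro ⟨y, ⟨-, hyU⟩, hyT⟩
      exact ⟨y, hyT, hyU⟩
  rw [this]
  exact .biUnion (countable_setOf_finite_support.mono inter_subset_left) fun y _ =>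
    measurableSet_setOf_mem_treeClosedSet y

end TreeClosedSet

theorem souslin_set_containing_countable_closed_sets_contains_non_sigmaCompact
    (𝓐 : Set {A : Set (ℕ → ℕ) // IsClosed A})
    (h𝓐 : IsSouslinIn (effrosSigma (ℕ → ℕ)) 𝓐)
    (hcount : ∀ A : {A : Set (ℕ → ℕ) // IsClosed A},
      (A : Set (ℕ → ℕ)).Countable → A ∈ 𝓐) :
    ∃ A ∈ 𝓐, ¬ IsSigmaCompact (A : Set (ℕ → ℕ)) := by
  by_contra! hσ
  apply not_isSouslinIn_compl_hasBranch
  convert h𝓐.preimage measurable_treeClosed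
  ext T
  exact ⟨fun hT => hcount _ (countable_treeClosedSet hT),
    fun hT hb => not_isSigmaCompact_treeClosedSet hb (hσ _ hT)⟩
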